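/- arXiv:1402.1569 — 3 statements merged into one kernel-verified Lean document; each statement's English description precedes it below -/
import Mathlib

section
/- Suppose the weights (w_1, …, w_r) form an AT system on [a,b] for every multi-index in ℕ^r (an AT ensemble), let n⃗ be a multi-index with N = |n⃗|, and assume the normalizing constant Z_N = ∫_{[a,b]^N} det(x_j^{i−1})_{i,j=1}^N det(g_i(x_j))_{i,j=1}^N dx_1⋯dx_N is nonzero. If m is an even positive integer, then for every real z the m-th moment of the average characteristic polynomial is strictly positive: E[ ∏_{k=1}^N (z − x_k)^m ] > 0, where E[F] = (1/Z_N) ∫_{[a,b]^N} F(x_1,…,x_N) det(x_j^{i−1})_{i,j=1}^N det(g_i(x_j))_{i,j=1}^N dx_1⋯dx_N. -/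
open MeasureTheory Polynomial Finset

/-!
Write `D(x) = det (x_j^(i)) · det (g_i(x_j))` for the unnormalised density. Both determinants change
sign under a permutation of the points, so `D` is symmetric, and it vanishes when two points
coincide. At distinct points of `E` the Vandermonde factor is nonzero, and so is the second
determinant: a null vector would give a nontrivial combination `∑ q_s(x) w_s(x)` with `N` zeros,
which the AT property forbids. Hence `D` is continuous and nonvanishing on the convex chamber
`{x ∈ E^N | x_1 < ⋯ < x_N}` and, by symmetry, has constant sign on all of `E^N`. Since
`∏_k (z - x_k)^m` is nonnegative for even `m` and vanishes only on a null set, the numerator and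
`Z` have the same strict sign.
-/

/-- The system of weights `w` forms an AT (algebraic Chebyshev) system on the interval `E`
for the multi-index `n`: every nontrivial linear combination of the functions
`x^i * w j x` (`i < n j`), i.e. every nontrivial `∑ j, q j (x) * w j x` with
`deg (q j) ≤ n j - 1`, has at most `|n| - 1` zeros on `E`. -/
def IsATSystemFor {r : ℕ} (E : Set ℝ) (w : Fin r → ℝ → ℝ) (n : Fin r → ℕ) : Prop :=
  ∀ q : Fin r → Polynomial ℝ, (∀ j, (q j).degree < (n j : WithBot ℕ)) → (∃ j, q j ≠ 0) →
    {x ∈ E | ∑ j, (q j).eval x * w j x = 0}.Finite ∧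
    {x ∈ E | ∑ j, (q j).eval x * w j x = 0}.ncard + 1 ≤ ∑ j, n j

/-- `P` is the type II multiple orthogonal polynomial on `E` for the weights `w` and the
multi-index `n`: it is monic of degree `|n|` and `∫ P(x) x^k w j (x) dx = 0` for all
`k < n j`. -/
def IsTypeII {r : ℕ} (E : Set ℝ) (w : Fin r → ℝ → ℝ) (n : Fin r → ℕ)
    (P : Polynomial ℝ) : Prop :=
  P.Monic ∧ P.natDegree = ∑ j, n j ∧
    ∀ j : Fin r, ∀ k < n j, ∫ x in E, P.eval x * x ^ k * w j x = 0

/-- `p` is a path of multi-indices of length `l` starting at `n`: `p 0 = n`,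
`|p j| = |n| + j`, and `p` is monotone componentwise. -/
def IsPath {r : ℕ} (l : ℕ) (n : Fin r → ℕ) (p : Fin l → Fin r → ℕ) : Prop :=
  (∀ h : 0 < l, p ⟨0, h⟩ = n) ∧
    (∀ j : Fin l, ∑ i, p j i = (∑ i, n i) + (j : ℕ)) ∧
    (∀ j k : Fin l, j ≤ k → ∀ i, p j i ≤ p k i)

/-- The Wronskian `det (P j ^ (i))_{i,j}` of a family of polynomials. -/
noncomputable def polyWronskian {l : ℕ} (P : Fin l → Polynomial ℝ) : Polynomial ℝ :=
  Matrix.det (Matrix.of fun i j : Fin l => Polynomial.derivative^[(i : ℕ)] (P j))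

theorem finSigmaFinEquiv_apply_eq_sum_Iio {r : ℕ} {n : Fin r → ℕ} (s : Fin r) (k : Fin (n s)) :
    (finSigmaFinEquiv ⟨s, k⟩ : ℕ) = ∑ t ∈ Iio s, n t + k := by
  have hIio : (univ : Finset (Fin s)).map (Fin.castLEEmb s.2.le) = Iio s := by
    ext t
    simp only [mem_map, mem_univ, true_and, mem_Iio]
    exact ⟨fun ⟨i, hi⟩ => hi ▸ i.2, fun ht => ⟨⟨t, ht⟩, rfl⟩⟩
  rw [finSigmaFinEquiv_apply, ← hIio, Finset.sum_map]
  rfl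

theorem Polynomial.coeff_sum_fin_C_mul_X_pow {R : Type*} [Semiring R] {n : ℕ} (f : Fin n → R)
    (k : Fin n) : (∑ i : Fin n, C (f i) * X ^ (i : ℕ)).coeff k = f k := by
  simp only [finsetSum_coeff, coeff_C_mul_X_pow, Fin.val_inj, Finset.sum_ite_eq, mem_univ,
    if_true]

section Determinants

variable {N : ℕ} {α R : Type*} [CommRing R]

theorem det_of_apply_comp_perm (f : Fin N → α → R) (x : Fin N → α) (σ : Equiv.Perm (Fin N)) :
    (Matrix.of fun i j => f i (x (σ j))).det =
      (Equiv.Perm.sign σ : ℤ) * (Matrix.of fun i j => f i (x j)).det :=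
  Matrix.det_permute' σ (Matrix.of fun i j => f i (x j))

theorem det_mul_det_of_apply_comp_perm (f g : Fin N → α → R) (x : Fin N → α)
    (σ : Equiv.Perm (Fin N)) :
    (Matrix.of fun i j => f i (x (σ j))).det * (Matrix.of fun i j => g i (x (σ j))).det =
      (Matrix.of fun i j => f i (x j)).det * (Matrix.of fun i j => g i (x j)).det := by
  rw [det_of_apply_comp_perm, det_of_apply_comp_perm, mul_mul_mul_comm, ← Int.cast_mul,
    ← Units.val_mul, Int.units_mul_self, Units.val_one, Int.cast_one, one_mul]

theorem det_of_apply_eq_zero_of_not_injective (f : Fin N → α → R) {x : Fin N → α}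
    (hx : ¬ Function.Injective x) : (Matrix.of fun i j => f i (x j)).det = 0 := by
  obtain ⟨j, j', hxj, hjj'⟩ : ∃ j j', x j = x j' ∧ j ≠ j' := by
    simpa [Function.Injective] using hx
  exact Matrix.det_zero_of_column_eq hjj' fun i => by simp [hxj]

theorem continuousOn_det_of_apply [TopologicalSpace α] [TopologicalSpace R] [IsTopologicalRing R]
    {E : Set α} {f : Fin N → α → R} (hf : ∀ i, ContinuousOn (f i) E) :
    ContinuousOn (fun x : Fin N → α => (Matrix.of fun i j => f i (x j)).det)
      (Set.univ.pi fun _ => E) :=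
  continuous_id.matrix_det.comp_continuousOn <| continuousOn_pi.2 fun i => continuousOn_pi.2
    fun j => (hf i).comp (continuous_apply j).continuousOn fun _ hx => hx j trivial

theorem integrable_det_mul_det [MeasurableSpace α] {μ : Measure α} [SigmaFinite μ]
    {f g : Fin N → α → ℝ} (hfg : ∀ i i', Integrable (fun t => f i t * g i' t) μ) :
    Integrable (fun x : Fin N → α =>
        (Matrix.of fun i j => f i (x j)).det * (Matrix.of fun i j => g i (x j)).det)
      (Measure.pi fun _ => μ) := by
  have hexpand : (fun x : Fin N → α =>
      (Matrix.of fun i j => f i (x j)).det * (Matrix.of fun i j => g i (x j)).det) =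
      fun x => ∑ σ : Equiv.Perm (Fin N), ∑ τ : Equiv.Perm (Fin N),
        ((Equiv.Perm.sign σ : ℤ) * (Equiv.Perm.sign τ : ℤ) : ℝ) *
          ∏ i, f (σ i) (x i) * g (τ i) (x i) := by
    funext x
    simp only [Matrix.det_apply', Matrix.of_apply, sum_mul_sum, prod_mul_distrib]
    exact sum_congr rfl fun σ _ => sum_congr rfl fun τ _ => by ring
  rw [hexpand]
  exact integrable_finsetSum _ fun σ _ => integrable_finsetSum _ fun τ _ =>
    (Integrable.fintype_prod fun i => hfg (σ i) (τ i)).const_mul _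

end Determinants

theorem convex_setOf_strictMono {ι : Type*} [Preorder ι] :
    Convex ℝ {x : ι → ℝ | StrictMono x} := by
  intro x hx y hy a b ha hb hab p q hpq
  have hxpq := hx hpq
  have hypq := hy hpq
  simp only [Pi.add_apply, Pi.smul_apply, smul_eq_mul]
  nlinarith [mul_pos (sub_pos.2 hxpq) (sub_pos.2 hypq), mul_nonneg ha (sq_nonneg (x q - x p)),
    mul_nonneg hb (sq_nonneg (y q - y p))]

theorem forall_nonneg_or_forall_nonpos_of_perm_invariant {N : ℕ} {E : Set ℝ}
    (hE : E.OrdConnected) {F : (Fin N → ℝ) → ℝ} (hF : ContinuousOn F (Set.univ.pi fun _ => E))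
    (hperm : ∀ x (σ : Equiv.Perm (Fin N)), F (x ∘ σ) = F x)
    (hdiag : ∀ x, ¬ Function.Injective x → F x = 0)
    (hne : ∀ x ∈ Set.univ.pi (fun _ => E), Function.Injective x → F x ≠ 0) :
    (∀ x ∈ Set.univ.pi (fun _ => E), 0 ≤ F x) ∨ (∀ x ∈ Set.univ.pi (fun _ => E), F x ≤ 0) := by
  set S : Set (Fin N → ℝ) := Set.univ.pi (fun _ => E) ∩ {x | StrictMono x}
  have hS : IsPreconnected S :=
    ((convex_pi fun _ _ => hE.convex).inter convex_setOf_strictMono).isPreconnected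
  have hsort : ∀ x ∈ Set.univ.pi (fun _ => E), F x ≠ 0 → ∃ y ∈ S, F y = F x := by
    intro x hx hFx
    have hinj : Function.Injective x := by_contra fun h => hFx (hdiag x h)
    exact ⟨x ∘ Tuple.sort x, ⟨fun i _ => hx _ trivial,
      (Tuple.monotone_sort x).strictMono_of_injective (hinj.comp (Equiv.injective _))⟩,
      hperm x _⟩
  by_contra! h
  obtain ⟨⟨x, hx, hFx⟩, ⟨y, hy, hFy⟩⟩ := h
  obtain ⟨x', hx'S, hx'⟩ := hsort x hx hFx.ne
  obtain ⟨y', hy'S, hy'⟩ := hsort y hy hFy.ne'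
  obtain ⟨u, huS, hu⟩ := hS.intermediate_value hx'S hy'S (hF.mono Set.inter_subset_left)
    ⟨hx' ▸ hFx.le, hy' ▸ hFy.le⟩
  exact hne u huS.1 huS.2.injective hu

theorem integrable_eval_mul {μ : Measure ℝ} {f : ℝ → ℝ}
    (hf : ∀ k : ℕ, Integrable (fun x => x ^ k * f x) μ) (p : ℝ[X]) :
    Integrable (fun x => p.eval x * f x) μ := by
  simp_rw [eval_eq_sum_range, sum_mul, mul_assoc]
  exact integrable_finsetSum _ fun i _ => (hf i).const_mul _

section Positivity

variable {α : Type*} [MeasurableSpace α] {μ : Measure α} {f h : α → ℝ}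

theorem integral_mul_pos_of_ae_ne_zero (hf : 0 ≤ᵐ[μ] f) (hfi : Integrable f μ)
    (hh : ∀ x, 0 ≤ h x) (hh0 : ∀ᵐ x ∂μ, h x ≠ 0) (hhf : Integrable (fun x => h x * f x) μ)
    (hpos : 0 < ∫ x, f x ∂μ) : 0 < ∫ x, h x * f x ∂μ := by
  rw [integral_pos_iff_support_of_nonneg_ae hf hfi] at hpos
  rw [integral_pos_iff_support_of_nonneg_ae (hf.mono fun x hx => mul_nonneg (hh x) hx) hhf,
    Function.support_mul, Set.inter_comm, measure_inter_conull]
  · exact hpos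
  · rw [Function.compl_support]
    simpa [ae_iff] using hh0

theorem div_integral_pos_of_ae_ne_zero (hsign : 0 ≤ᵐ[μ] f ∨ f ≤ᵐ[μ] 0) (hfi : Integrable f μ)
    (hh : ∀ x, 0 ≤ h x) (hh0 : ∀ᵐ x ∂μ, h x ≠ 0) (hhf : Integrable (fun x => h x * f x) μ)
    (hf0 : ∫ x, f x ∂μ ≠ 0) : 0 < (∫ x, h x * f x ∂μ) / ∫ x, f x ∂μ := by
  rcases hsign with hf | hf
  · have hpos := (integral_nonneg_of_ae hf).lt_of_ne' hf0
    exact div_pos (integral_mul_pos_of_ae_ne_zero hf hfi hh hh0 hhf hpos) hpos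
  · have hf' : 0 ≤ᵐ[μ] fun x => -f x := hf.mono fun x hx => neg_nonneg.mpr hx
    have hpos : 0 < ∫ x, -f x ∂μ :=
      (integral_nonneg_of_ae hf').lt_of_ne' (by rwa [integral_neg, neg_ne_zero])
    have hhpos := integral_mul_pos_of_ae_ne_zero hf' hfi.neg hh hh0
      (by simpa only [mul_neg] using hhf.fun_neg) hpos
    simp only [mul_neg, integral_neg] at hpos hhpos
    exact div_pos_of_neg_of_neg (neg_pos.mp hhpos) (neg_pos.mp hpos)

end Positivity

theorem ae_forall_apply_ne {ι : Type*} [Fintype ι] (z : ℝ) : ∀ᵐ x : ι → ℝ, ∀ k, x k ≠ z :=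
  ae_all_iff.2 fun _ =>
    (Measure.tendsto_eval_ae_ae (μ := fun _ : ι => (volume : Measure ℝ))).eventually
      (Measure.ae_ne volume z)

theorem det_of_apply_ne_zero_of_isATSystemFor {r : ℕ} {E : Set ℝ} {w : Fin r → ℝ → ℝ}
    {n : Fin r → ℕ} (hAT : IsATSystemFor E w n) {g : Fin (∑ s, n s) → ℝ → ℝ}
    (hg : ∀ s (k : Fin (n s)), g (finSigmaFinEquiv ⟨s, k⟩) = fun x => x ^ (k : ℕ) * w s x)
    {x : Fin (∑ s, n s) → ℝ} (hxE : ∀ j, x j ∈ E) (hx : Function.Injective x) :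
    (Matrix.of fun i j => g i (x j)).det ≠ 0 := by
  intro hdet
  obtain ⟨v, hv0, hv⟩ := Matrix.exists_vecMul_eq_zero_iff.mpr hdet
  set q : Fin r → ℝ[X] := fun s =>
    ∑ k : Fin (n s), C (v (finSigmaFinEquiv ⟨s, k⟩)) * X ^ (k : ℕ) with hq
  have hqeval : ∀ y, ∑ s, (q s).eval y * w s y = ∑ i, v i * g i y := by
    intro y
    rw [← finSigmaFinEquiv.sum_comp, Fintype.sum_sigma]
    refine sum_congr rfl fun s _ => ?_
    simp only [hq, hg, eval_finsetSum, eval_mul, eval_C, eval_pow, eval_X, sum_mul]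
    exact sum_congr rfl fun k _ => by ring
  have hqne : ∃ s, q s ≠ 0 := by
    by_contra! hq0
    refine hv0 (funext fun i => ?_)
    obtain ⟨⟨s, k⟩, rfl⟩ := finSigmaFinEquiv.surjective i
    simpa only [hq, coeff_sum_fin_C_mul_X_pow, coeff_zero, Pi.zero_apply] using
      congrArg (coeff · k) (hq0 s)
  obtain ⟨hfin, hcard⟩ := hAT q (fun s => degree_sum_fin_lt _) hqne
  have hrange : Set.range x ⊆ {y ∈ E | ∑ s, (q s).eval y * w s y = 0} := by
    rintro _ ⟨j, rfl⟩
    refine ⟨hxE j, ?_⟩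
    simpa [hqeval, Matrix.vecMul, dotProduct] using congrFun hv j
  have := Set.ncard_le_ncard hrange hfin
  rw [Set.ncard_range_of_injective hx, Nat.card_fin] at this
  omega

noncomputable def ensembleDensity {N : ℕ} (g : Fin N → ℝ → ℝ) (x : Fin N → ℝ) : ℝ :=
  (Matrix.of fun i j : Fin N => x j ^ (i : ℕ)).det * (Matrix.of fun i j => g i (x j)).det

theorem integrableOn_prod_eval_mul_ensembleDensity {N : ℕ} {E : Set ℝ} {g : Fin N → ℝ → ℝ}
    (hg : ∀ i (p : ℝ[X]), IntegrableOn (fun t => p.eval t * g i t) E) (p : ℝ[X]) :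
    IntegrableOn (fun x : Fin N → ℝ => (∏ k, p.eval (x k)) * ensembleDensity g x)
      (Set.univ.pi fun _ => E) := by
  have hrow : ∀ x : Fin N → ℝ, (∏ k, p.eval (x k)) * ensembleDensity g x =
      (Matrix.of fun i j : Fin N => p.eval (x j) * x j ^ (i : ℕ)).det *
        (Matrix.of fun i j => g i (x j)).det := fun x => by
    rw [ensembleDensity, ← mul_assoc, ← Matrix.det_mul_row]
    rfl
  simp_rw [IntegrableOn, volume_pi, Measure.restrict_pi_pi, hrow]
  refine integrable_det_mul_det (f := fun i t => p.eval t * t ^ (i : ℕ)) (g := g) fun i i' => ?_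
  have hpX := hg i' (p * X ^ (i : ℕ))
  simp only [eval_mul, eval_pow, eval_X] at hpX
  exact hpX

theorem ensembleDensity_nonneg_or_nonpos {r : ℕ} {E : Set ℝ} (hE : E.OrdConnected)
    {w : Fin r → ℝ → ℝ} (hwc : ∀ s, ContinuousOn (w s) E) {n : Fin r → ℕ}
    (hAT : IsATSystemFor E w n) {g : Fin (∑ s, n s) → ℝ → ℝ}
    (hg : ∀ s (k : Fin (n s)), g (finSigmaFinEquiv ⟨s, k⟩) = fun x => x ^ (k : ℕ) * w s x) :
    (∀ x ∈ Set.univ.pi (fun _ => E), 0 ≤ ensembleDensity g x) ∨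
      (∀ x ∈ Set.univ.pi (fun _ => E), ensembleDensity g x ≤ 0) := by
  have hgc : ∀ i, ContinuousOn (g i) E := by
    intro i
    obtain ⟨⟨s, k⟩, rfl⟩ := finSigmaFinEquiv.surjective i
    rw [hg]
    exact (continuous_pow _).continuousOn.mul (hwc s)
  refine forall_nonneg_or_forall_nonpos_of_perm_invariant hE
    ((continuousOn_det_of_apply fun _ => (continuous_pow _).continuousOn).mul
      (continuousOn_det_of_apply hgc))
    (fun x σ => det_mul_det_of_apply_comp_perm _ _ x σ)
    (fun x hx => by rw [ensembleDensity, det_of_apply_eq_zero_of_not_injective _ hx, mul_zero])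
    fun x hx hinj => mul_ne_zero ?_
      (det_of_apply_ne_zero_of_isATSystemFor hAT hg (fun j => hx j trivial) hinj)
  rw [show (Matrix.of fun i j : Fin (∑ s, n s) => x j ^ (i : ℕ)) =
    (Matrix.vandermonde x).transpose from rfl, Matrix.det_transpose]
  exact Matrix.det_vandermonde_ne_zero_iff.2 hinj

theorem moment_average_char_poly_pos_of_even_general {r : ℕ}
    (E : Set ℝ) (hE : E.OrdConnected) (hEm : MeasurableSet E)
    (w : Fin r → ℝ → ℝ) (hwc : ∀ j, ContinuousOn (w j) E)
    (hwi : ∀ (j : Fin r) (k : ℕ), IntegrableOn (fun x => x ^ k * w j x) E)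
    (hAT : ∀ n : Fin r → ℕ, IsATSystemFor E w n)
    (n : Fin r → ℕ)
    (g : Fin (∑ i, n i) → ℝ → ℝ)
    (hg : ∀ (s : Fin r) (i : ℕ) (hi : i < n s)
        (hlt : (∑ t ∈ Finset.Iio s, n t) + i < ∑ i, n i),
        g ⟨(∑ t ∈ Finset.Iio s, n t) + i, hlt⟩ = fun x => x ^ i * w s x)
    (Z : ℝ)
    (hZ : Z = ∫ x : Fin (∑ i, n i) → ℝ in (Set.univ.pi fun _ => E),
        Matrix.det (Matrix.of fun i j => x j ^ (i : ℕ)) *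
        Matrix.det (Matrix.of fun i j => g i (x j)))
    (hZ0 : Z ≠ 0)
    (m : ℕ) (hmeven : Even m) (z : ℝ) :
    0 < (∫ x : Fin (∑ i, n i) → ℝ in (Set.univ.pi fun _ => E),
        (∏ k, (z - x k) ^ m) *
          (Matrix.det (Matrix.of fun i j => x j ^ (i : ℕ)) *
           Matrix.det (Matrix.of fun i j => g i (x j)))) / Z := by
  have hg' : ∀ s (k : Fin (n s)), g (finSigmaFinEquiv ⟨s, k⟩) = fun x => x ^ (k : ℕ) * w s x :=
    fun s k => (congrArg g (Fin.ext (finSigmaFinEquiv_apply_eq_sum_Iio s k))).trans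
      (hg s k k.2 (finSigmaFinEquiv_apply_eq_sum_Iio s k ▸ (finSigmaFinEquiv ⟨s, k⟩).isLt))
  have hgi : ∀ i (p : ℝ[X]), IntegrableOn (fun t => p.eval t * g i t) E := by
    intro i p
    obtain ⟨⟨s, k⟩, rfl⟩ := finSigmaFinEquiv.surjective i
    rw [hg']
    refine integrable_eval_mul (fun j => ?_) p
    have hwjk := hwi s (j + k)
    simp only [pow_add, mul_assoc] at hwjk
    exact hwjk
  have hpiE : MeasurableSet (Set.univ.pi fun _ : Fin (∑ i, n i) => E) :=
    MeasurableSet.univ_pi fun _ => hEm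
  have hZ' : Z = ∫ x in Set.univ.pi fun _ => E, ensembleDensity g x := hZ
  have hint := integrableOn_prod_eval_mul_ensembleDensity hgi 1
  have hint_moment := integrableOn_prod_eval_mul_ensembleDensity hgi ((C z - X) ^ m)
  simp only [eval_one, prod_const_one, one_mul] at hint
  simp only [eval_pow, eval_sub, eval_C, eval_X] at hint_moment
  show 0 < (∫ x in Set.univ.pi fun _ => E, (∏ k, (z - x k) ^ m) * ensembleDensity g x) / Z
  rw [hZ'] at hZ0 ⊢
  exact div_integral_pos_of_ae_ne_zero
    ((ensembleDensity_nonneg_or_nonpos hE hwc (hAT n) hg').imp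
      (ae_restrict_of_forall_mem hpiE) (ae_restrict_of_forall_mem hpiE))
    hint (fun x => prod_nonneg fun k _ => hmeven.pow_nonneg _)
    (ae_restrict_of_ae ((ae_forall_apply_ne z).mono fun x hx =>
      prod_ne_zero_iff.2 fun k _ => pow_ne_zero _ (sub_ne_zero.2 (hx k).symm)))
    hint_moment hZ0

/-- for an AT ensemble with multi-index `n` and `N = |n|` points, the even
moments of the average characteristic polynomial are strictly positive at every real
`z`: `E[∏_k (z - x_k)^m] > 0` for `m` even and positive. -/
theorem moment_average_char_poly_pos_of_even {r : ℕ} (hr : 1 ≤ r)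
    (E : Set ℝ) (hE : E.OrdConnected) (hEm : MeasurableSet E)
    (w : Fin r → ℝ → ℝ) (hwc : ∀ j, ContinuousOn (w j) E)
    (hwi : ∀ (j : Fin r) (k : ℕ), IntegrableOn (fun x => x ^ k * w j x) E)
    (hAT : ∀ n : Fin r → ℕ, IsATSystemFor E w n)
    (n : Fin r → ℕ)
    (g : Fin (∑ i, n i) → ℝ → ℝ)
    (hg : ∀ (s : Fin r) (i : ℕ) (hi : i < n s)
        (hlt : (∑ t ∈ Finset.Iio s, n t) + i < ∑ i, n i),
        g ⟨(∑ t ∈ Finset.Iio s, n t) + i, hlt⟩ = fun x => x ^ i * w s x)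
    (Z : ℝ)
    (hZ : Z = ∫ x : Fin (∑ i, n i) → ℝ in (Set.univ.pi fun _ => E),
        Matrix.det (Matrix.of fun i j => x j ^ (i : ℕ)) *
        Matrix.det (Matrix.of fun i j => g i (x j)))
    (hZ0 : Z ≠ 0)
    (m : ℕ) (hm : 1 ≤ m) (hmeven : Even m) (z : ℝ) :
    0 < (∫ x : Fin (∑ i, n i) → ℝ in (Set.univ.pi fun _ => E),
        (∏ k, (z - x k) ^ m) *
          (Matrix.det (Matrix.of fun i j => x j ^ (i : ℕ)) *
           Matrix.det (Matrix.of fun i j => g i (x j)))) / Z :=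
  moment_average_char_poly_pos_of_even_general E hE hEm w hwc hwi hAT n g hg Z hZ hZ0 m hmeven z
end

section
/- For every multi-index n⃗ ∈ ℕ^r, every j ∈ {1, …, r}, and every l ≥ 1, the Wronskian of multiple Hermite polynomials along the path (n⃗, n⃗+e⃗_j, …, n⃗+(l−1)e⃗_j) equals (−2)^{l(l−1)/2} times the corresponding Hankel determinant: det( H_{n⃗+k e⃗_j}^{(i)}(x) )_{i,k=0}^{l−1} = (−2)^{l(l−1)/2} · det( H_{n⃗+(i+k)e⃗_j}(x) )_{i,k=0}^{l−1} for all x ∈ ℝ, where H^{(i)} denotes the i-th derivative. -/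
/-
Differentiating the raising relation `H'_{n+k e_j} = (2x - c_j) H_{n+k e_j} - 2 H_{n+(k+1) e_j}`
repeatedly writes the `i`-th derivative of `H_{n+k e_j}` as `(-2)^i H_{n+(k+i) e_j}` plus a
combination of the `H_{n+(k+s) e_j}`, `s < i`, whose coefficients do not depend on `k`. Hence the
Wronskian matrix is a lower triangular matrix with diagonal `(-2)^i` times the Hankel matrix.

The raising relation holds because the difference `D` of its two sides has degree at most `|n|`
and satisfies the orthogonality conditions of `m = n + e_j`, and such a polynomial vanishes:
`∫ x^k D(x) e^{-x² + c x} dx = √π e^{c²/4} (T^k Q)(c)` with `T Q = Q' + x Q / 2` and a polynomial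
`Q` of degree at most `deg D`, nonzero if `D` is, so the conditions force `(x - c_i)^{m_i} ∣ Q`
for every `i`, which is more roots than `Q` can have.
-/
open MeasureTheory Polynomial Finset

/-- `P` is the multiple Hermite polynomial for the (pairwise distinct) parameters `c`
and the multi-index `n`: it is monic of degree `|n|` and satisfies
`∫ x^k P(x) exp(-x² + c j x) dx = 0` for all `k < n j` and all `j`. -/
def IsMultipleHermite {r : ℕ} (c : Fin r → ℝ) (n : Fin r → ℕ)
    (P : Polynomial ℝ) : Prop :=
  P.Monic ∧ P.natDegree = ∑ i, n i ∧
    ∀ j : Fin r, ∀ k < n j,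
      ∫ x : ℝ, x ^ k * P.eval x * Real.exp (-x ^ 2 + c j * x) = 0

/-- The `j`-th standard unit multi-index `e⃗_j` in `ℕ^r`. -/
def unitMI {r : ℕ} (j : Fin r) : Fin r → ℕ := fun i => if i = j then 1 else 0

open Real

namespace Polynomial

variable {R : Type*} [CommRing R] (B : R[X]) (a : R)

noncomputable def iterateDerivativeCoeff : ℕ → ℕ → R[X]
  | 0, s => if s = 0 then 1 else 0
  | i + 1, 0 => derivative (iterateDerivativeCoeff i 0) + B * iterateDerivativeCoeff i 0
  | i + 1, s + 1 => derivative (iterateDerivativeCoeff i (s + 1))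
      + B * iterateDerivativeCoeff i (s + 1) + C a * iterateDerivativeCoeff i s

lemma iterateDerivativeCoeff_eq_zero_of_lt {i s : ℕ} (h : i < s) :
    iterateDerivativeCoeff B a i s = 0 := by
  induction i generalizing s with
  | zero => simp [iterateDerivativeCoeff, h.ne']
  | succ i ih =>
    obtain ⟨s, rfl⟩ : ∃ t, s = t + 1 := ⟨s - 1, by omega⟩
    simp [iterateDerivativeCoeff, ih (by omega : i < s + 1), ih (by omega : i < s)]

lemma iterateDerivativeCoeff_self (i : ℕ) : iterateDerivativeCoeff B a i i = C a ^ i := by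
  induction i with
  | zero => simp [iterateDerivativeCoeff]
  | succ i ih =>
    simp [iterateDerivativeCoeff, ih, pow_succ, mul_comm,
      iterateDerivativeCoeff_eq_zero_of_lt B a (Nat.lt_succ_self i)]

variable {B a} {P : ℕ → R[X]}

lemma iterate_derivative_eq_sum_iterateDerivativeCoeff
    (hP : ∀ k, derivative (P k) = B * P k + C a * P (k + 1)) {i N : ℕ} (hiN : i < N) (k : ℕ) :
    derivative^[i] (P k) = ∑ s ∈ range N, iterateDerivativeCoeff B a i s * P (k + s) := by
  induction i with
  | zero =>
    rw [sum_eq_single_of_mem 0 (mem_range.2 hiN) fun s _ hs => by simp [iterateDerivativeCoeff, hs]]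
    simp [iterateDerivativeCoeff]
  | succ i ih =>
    obtain ⟨M, rfl⟩ : ∃ M, N = M + 1 := ⟨N - 1, by omega⟩
    have hiM : iterateDerivativeCoeff B a i M = 0 :=
      iterateDerivativeCoeff_eq_zero_of_lt B a (by omega)
    have hterm (s : ℕ) : derivative (iterateDerivativeCoeff B a i s * P (k + s)) =
        (derivative (iterateDerivativeCoeff B a i s) + B * iterateDerivativeCoeff B a i s)
          * P (k + s) + C a * iterateDerivativeCoeff B a i s * P (k + (s + 1)) := by
      rw [derivative_mul, hP, ← add_assoc]
      ring
    rw [Function.iterate_succ_apply', ih (by omega), derivative_sum]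
    simp only [hterm, sum_add_distrib]
    rw [sum_range_succ' _ M, sum_range_succ _ M, sum_range_succ' _ M, hiM]
    simp only [iterateDerivativeCoeff, add_mul, sum_add_distrib, mul_zero, zero_mul, add_zero]
    abel

theorem det_iterate_derivative_eq_pow_mul_det_hankel
    (hP : ∀ k, derivative (P k) = B * P k + C a * P (k + 1)) (l : ℕ) (x : R) :
    (Matrix.of fun i k : Fin l => (derivative^[i] (P k)).eval x).det =
      a ^ (l * (l - 1) / 2) * (Matrix.of fun i k : Fin l => (P (i + k)).eval x).det := by
  set A : Matrix (Fin l) (Fin l) R :=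
    Matrix.of fun i s => (iterateDerivativeCoeff B a i s).eval x
  have hW : (Matrix.of fun i k : Fin l => (derivative^[i] (P k)).eval x) =
      A * Matrix.of fun i k : Fin l => (P (i + k)).eval x := by
    ext i k
    rw [Matrix.of_apply, iterate_derivative_eq_sum_iterateDerivativeCoeff hP i.isLt,
      eval_finsetSum, Matrix.mul_apply, ← Fin.sum_univ_eq_sum_range]
    simp [A, add_comm]
  have hA : A.IsLowerTriangular := fun i s his => by
    simp [A, iterateDerivativeCoeff_eq_zero_of_lt B a (show (i : ℕ) < s from his)]
  rw [hW, Matrix.det_mul, Matrix.det_of_isLowerTriangular A hA]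
  simp [A, iterateDerivativeCoeff_self, prod_pow_eq_pow_sum,
    Fin.sum_univ_eq_sum_range (fun i => i) l, sum_range_id]

end Polynomial

lemma integrable_eval_mul_exp_neg_sq (P : ℝ[X]) :
    Integrable fun x : ℝ => P.eval x * exp (-x ^ 2) := by
  induction P using Polynomial.induction_on' with
  | add p q hp hq => exact (hp.add hq).congr (.of_forall fun x => by simp [add_mul])
  | monomial m a =>
    have h := integrable_rpow_mul_exp_neg_mul_sq zero_lt_one (s := m)
      (by linarith [m.cast_nonneg (α := ℝ)])
    simpa [rpow_natCast, mul_assoc] using h.const_mul a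

lemma exp_neg_sq_add_mul (c x : ℝ) :
    exp (-x ^ 2 + c * x) = exp (c ^ 2 / 4) * exp (-(x - c / 2) ^ 2) := by
  rw [← exp_add]; ring_nf

lemma integrable_eval_mul_exp_neg_sq_add_mul (P : ℝ[X]) (c : ℝ) :
    Integrable fun x : ℝ => P.eval x * exp (-x ^ 2 + c * x) := by
  have h := ((integrable_eval_mul_exp_neg_sq (P.comp (X + C (c / 2)))).comp_sub_right
    (c / 2)).const_mul (exp (c ^ 2 / 4))
  refine h.congr (Filter.Eventually.of_forall fun x => ?_)
  simp only [eval_comp, eval_add, eval_X, eval_C, sub_add_cancel, exp_neg_sq_add_mul]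
  ring

noncomputable def weightedIntegral (c : ℝ) : ℝ[X] →ₗ[ℝ] ℝ where
  toFun P := ∫ x, P.eval x * exp (-x ^ 2 + c * x)
  map_add' P Q := by
    simp only [eval_add, add_mul]
    exact integral_add (integrable_eval_mul_exp_neg_sq_add_mul P c)
      (integrable_eval_mul_exp_neg_sq_add_mul Q c)
  map_smul' a P := by simp [mul_assoc, integral_const_mul]

lemma weightedIntegral_apply (c : ℝ) (P : ℝ[X]) :
    weightedIntegral c P = ∫ x, P.eval x * exp (-x ^ 2 + c * x) := rfl

lemma hasDerivAt_eval_mul_exp_neg_sq_add_mul (P : ℝ[X]) (c x : ℝ) :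
    HasDerivAt (fun y => P.eval y * exp (-y ^ 2 + c * y))
      ((derivative P + (C c - 2 * X) * P).eval x * exp (-x ^ 2 + c * x)) x := by
  have hexp : HasDerivAt (fun y => -y ^ 2 + c * y) (-(2 * x) + c) x :=
    ((hasDerivAt_pow 2 x).neg.add ((hasDerivAt_id x).const_mul c)).congr_deriv (by simp)
  refine ((P.hasDerivAt x).mul hexp.exp).congr_deriv ?_
  simp only [eval_add, eval_mul, eval_sub, eval_C, eval_X, eval_ofNat]
  ring

theorem weightedIntegral_derivative_add (c : ℝ) (P : ℝ[X]) :
    weightedIntegral c (derivative P + (C c - 2 * X) * P) = 0 :=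
  integral_eq_zero_of_hasDerivAt_of_integrable (hasDerivAt_eval_mul_exp_neg_sq_add_mul P c)
    (integrable_eval_mul_exp_neg_sq_add_mul _ c) (integrable_eval_mul_exp_neg_sq_add_mul P c)

lemma weightedIntegral_one (c : ℝ) : weightedIntegral c 1 = √π * exp (c ^ 2 / 4) := by
  have h := integral_sub_right_eq_self (μ := volume) (fun x : ℝ => exp (-x ^ 2)) (c / 2)
  simp only [weightedIntegral_apply, eval_one, one_mul, exp_neg_sq_add_mul, integral_const_mul]
  rw [h, mul_comm]
  simpa using integral_gaussian 1

lemma two_mul_weightedIntegral_X_pow_succ (c : ℝ) (m : ℕ) :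
    2 * weightedIntegral c (X ^ (m + 1)) =
      m * weightedIntegral c (X ^ (m - 1)) + c * weightedIntegral c (X ^ m) := by
  have h := weightedIntegral_derivative_add c (X ^ m)
  have hP : derivative (X ^ m) + (C c - 2 * X) * X ^ m =
      (m : ℝ) • X ^ (m - 1) + c • X ^ m - (2 : ℝ) • X ^ (m + 1) := by
    simp only [derivative_X_pow, smul_eq_C_mul, C_ofNat]
    ring
  rw [hP, map_sub, map_add, map_smul, map_smul, map_smul, smul_eq_mul, smul_eq_mul,
    smul_eq_mul] at h
  linear_combination -h

section TwistedDerivative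

/-- `(e^{c²/4} Q(c))' = e^{c²/4} (twistedDerivative Q)(c)`, so that `twistedDerivative` acts on
`momentTransform` as differentiation in `c` acts on `weightedIntegral c`. -/
noncomputable def twistedDerivative : Module.End ℝ ℝ[X] :=
  derivative + LinearMap.mulLeft ℝ (C 2⁻¹ * X)

local notation "T" => twistedDerivative

lemma twistedDerivative_apply (Q : ℝ[X]) : T Q = derivative Q + C 2⁻¹ * X * Q := rfl

lemma derivative_twistedDerivative (Q : ℝ[X]) :
    derivative (T Q) = T (derivative Q) + C 2⁻¹ * Q := by
  simp only [twistedDerivative_apply, derivative_add, derivative_mul, derivative_C,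
    derivative_X]
  ring

lemma derivative_twistedDerivative_pow_succ_one (m : ℕ) :
    derivative ((T ^ (m + 1)) 1) = C ((m + 1) / 2 : ℝ) * (T ^ m) 1 := by
  induction m with
  | zero => simp [derivative_twistedDerivative]
  | succ m ih =>
    rw [pow_succ', Module.End.mul_apply, derivative_twistedDerivative, ih, ← smul_eq_C_mul,
      map_smul, smul_eq_C_mul, ← Module.End.mul_apply, ← pow_succ', ← add_mul, ← C_add]
    congr 2
    push_cast
    ring

lemma two_mul_eval_twistedDerivative_pow_succ_one (c : ℝ) (m : ℕ) :
    2 * ((T ^ (m + 1)) 1).eval c =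
      m * ((T ^ (m - 1)) 1).eval c + c * ((T ^ m) 1).eval c := by
  rw [pow_succ', Module.End.mul_apply, twistedDerivative_apply]
  cases m with
  | zero => simp
  | succ m =>
    rw [derivative_twistedDerivative_pow_succ_one]
    simp only [eval_add, eval_mul, eval_C, eval_X, Nat.add_sub_cancel]
    push_cast
    ring

theorem weightedIntegral_X_pow (c : ℝ) (m : ℕ) :
    weightedIntegral c (X ^ m) = √π * exp (c ^ 2 / 4) * ((T ^ m) 1).eval c := by
  induction m using Nat.strong_induction_on with
  | _ m ih =>
    rcases m with _ | m
    · simp [weightedIntegral_one]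
    · have h := two_mul_weightedIntegral_X_pow_succ c m
      rw [ih m (by omega), ih (m - 1) (by omega)] at h
      have hT := two_mul_eval_twistedDerivative_pow_succ_one c m
      linear_combination h / 2 - √π * exp (c ^ 2 / 4) * hT / 2

noncomputable def momentTransform (P : ℝ[X]) : ℝ[X] := aeval T P 1

theorem weightedIntegral_eq_eval_momentTransform (c : ℝ) (P : ℝ[X]) :
    weightedIntegral c P = √π * exp (c ^ 2 / 4) * (momentTransform P).eval c := by
  induction P using Polynomial.induction_on' with
  | add p q hp hq => simp [momentTransform, hp, hq, mul_add]
  | monomial m a =>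
    simp only [← C_mul_X_pow_eq_monomial, ← smul_eq_C_mul, map_smul, weightedIntegral_X_pow,
      smul_eq_mul, momentTransform, map_pow, aeval_X, LinearMap.smul_apply, eval_smul]
    ring

lemma momentTransform_X_pow_mul (k : ℕ) (P : ℝ[X]) :
    momentTransform (X ^ k * P) = (T ^ k) (momentTransform P) := by
  simp [momentTransform, Module.End.mul_apply]

lemma natDegree_twistedDerivative_le {Q : ℝ[X]} {d : ℕ} (hQ : Q.natDegree ≤ d) :
    (T Q).natDegree ≤ d + 1 := by
  have hX := natDegree_mul_le (p := C 2⁻¹ * X) (q := Q)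
  have hCX := (natDegree_C_mul_le (2⁻¹ : ℝ) X).trans natDegree_X_le
  rw [twistedDerivative_apply]
  exact natDegree_add_le_of_degree_le ((natDegree_derivative_le Q).trans (by omega)) (by omega)

lemma coeff_twistedDerivative_succ {Q : ℝ[X]} {d : ℕ} (hQ : Q.natDegree ≤ d) :
    (T Q).coeff (d + 1) = 2⁻¹ * Q.coeff d := by
  rw [twistedDerivative_apply, coeff_add, mul_assoc, coeff_C_mul, coeff_X_mul,
    coeff_eq_zero_of_natDegree_lt ((natDegree_derivative_le Q).trans_lt (by omega)), zero_add]

lemma natDegree_twistedDerivative_pow_one_le (m : ℕ) : ((T ^ m) 1).natDegree ≤ m := by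
  induction m with
  | zero => simp
  | succ m ih =>
    rw [pow_succ', Module.End.mul_apply]
    exact natDegree_twistedDerivative_le ih

lemma coeff_twistedDerivative_pow_one_self (m : ℕ) : ((T ^ m) 1).coeff m = 2⁻¹ ^ m := by
  induction m with
  | zero => simp
  | succ m ih =>
    rw [pow_succ', Module.End.mul_apply, coeff_twistedDerivative_succ
      (natDegree_twistedDerivative_pow_one_le m), ih, pow_succ']

lemma momentTransform_eq_sum (P : ℝ[X]) :
    momentTransform P = ∑ i ∈ range (P.natDegree + 1), P.coeff i • (T ^ i) 1 := by
  simp [momentTransform, aeval_eq_sum_range, LinearMap.sum_apply]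

lemma natDegree_momentTransform_le (P : ℝ[X]) :
    (momentTransform P).natDegree ≤ P.natDegree := by
  rw [momentTransform_eq_sum]
  refine natDegree_sum_le_of_forall_le _ _ fun i hi => (natDegree_smul_le _ _).trans ?_
  exact (natDegree_twistedDerivative_pow_one_le i).trans (Nat.lt_succ_iff.1 (mem_range.1 hi))

lemma momentTransform_ne_zero {P : ℝ[X]} (hP : P ≠ 0) : momentTransform P ≠ 0 := by
  have hcoeff : (momentTransform P).coeff P.natDegree = P.leadingCoeff * 2⁻¹ ^ P.natDegree := by
    rw [momentTransform_eq_sum, finsetSum_coeff, sum_eq_single P.natDegree]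
    · rw [coeff_smul, coeff_twistedDerivative_pow_one_self, smul_eq_mul, leadingCoeff]
    · intro i hi hne
      rw [coeff_smul, coeff_eq_zero_of_natDegree_lt
        ((natDegree_twistedDerivative_pow_one_le i).trans_lt
          (lt_of_le_of_ne (Nat.lt_succ_iff.1 (mem_range.1 hi)) hne)), smul_zero]
    · simp
  intro h
  rw [h, coeff_zero] at hcoeff
  exact mul_ne_zero (leadingCoeff_ne_zero.2 hP) (by positivity) hcoeff.symm

lemma twistedDerivative_X_sub_C_pow_succ_mul (a : ℝ) (m : ℕ) (S : ℝ[X]) :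
    T ((X - C a) ^ (m + 1) * S) = (X - C a) ^ m * (C (m + 1 : ℝ) * S + (X - C a) * T S) := by
  simp only [twistedDerivative_apply, derivative_mul, derivative_pow, derivative_sub,
    derivative_X, derivative_C]
  push_cast
  ring

lemma eval_twistedDerivative_pow_X_sub_C_pow_mul (a : ℝ) (m : ℕ) (S : ℝ[X]) :
    ((T ^ m) ((X - C a) ^ m * S)).eval a = m.factorial * S.eval a := by
  induction m generalizing S with
  | zero => simp
  | succ m ih =>
    rw [pow_succ, Module.End.mul_apply, twistedDerivative_X_sub_C_pow_succ_mul, ih]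
    simp only [eval_add, eval_mul, eval_sub, eval_X, eval_C, sub_self, zero_mul, add_zero,
      Nat.factorial_succ, Nat.cast_mul, Nat.cast_add, Nat.cast_one]
    ring

lemma X_sub_C_pow_dvd_of_eval_twistedDerivative_pow (a : ℝ) (m : ℕ) {Q : ℝ[X]}
    (hQ : ∀ s < m, ((T ^ s) Q).eval a = 0) : (X - C a) ^ m ∣ Q := by
  induction m with
  | zero => simp
  | succ m ih =>
    obtain ⟨S, rfl⟩ := ih fun s hs => hQ s (by omega)
    have hS : S.IsRoot a := by
      have := hQ m (by omega)
      rw [eval_twistedDerivative_pow_X_sub_C_pow_mul] at this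
      exact (mul_eq_zero.1 this).resolve_left (Nat.cast_ne_zero.2 m.factorial_ne_zero)
    obtain ⟨U, rfl⟩ := dvd_iff_isRoot.2 hS
    exact ⟨U, by ring⟩

theorem eq_zero_of_weightedIntegral_X_pow_mul_eq_zero {r : ℕ} {c : Fin r → ℝ}
    (hc : Function.Injective c) (m : Fin r → ℕ) {D : ℝ[X]} (hD : D.natDegree < ∑ i, m i)
    (horth : ∀ i, ∀ s < m i, weightedIntegral (c i) (X ^ s * D) = 0) : D = 0 := by
  by_contra hD0
  have hK (x : ℝ) : √π * exp (x ^ 2 / 4) ≠ 0 := by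
    have := sqrt_pos.2 pi_pos
    positivity
  have hdvd (i : Fin r) : (X - C (c i)) ^ m i ∣ momentTransform D := by
    refine X_sub_C_pow_dvd_of_eval_twistedDerivative_pow _ _ fun s hs => ?_
    have := horth i s hs
    rw [weightedIntegral_eq_eval_momentTransform, momentTransform_X_pow_mul] at this
    exact (mul_eq_zero.1 this).resolve_left (hK _)
  have hprod : (∏ i, (X - C (c i)) ^ m i) ∣ momentTransform D :=
    prod_dvd_of_coprime (fun i _ k _ hik => (pairwise_coprime_X_sub_C hc hik).pow)
      fun i _ => hdvd i
  have hdeg := natDegree_le_of_dvd hprod (momentTransform_ne_zero hD0)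
  rw [natDegree_prod_of_monic _ _ fun i _ => (monic_X_sub_C _).pow _] at hdeg
  simp only [natDegree_pow, natDegree_X_sub_C, mul_one] at hdeg
  have := natDegree_momentTransform_le D
  omega

end TwistedDerivative

lemma sum_add_unitMI {r : ℕ} (n : Fin r → ℕ) (j : Fin r) :
    ∑ i, (n + unitMI j) i = ∑ i, n i + 1 := by
  simp [unitMI, sum_add_distrib]

namespace IsMultipleHermite

variable {r : ℕ} {c : Fin r → ℝ} {n : Fin r → ℕ} {P : ℝ[X]}

lemma weightedIntegral_X_pow_mul_eq_zero (hP : IsMultipleHermite c n P) {i : Fin r} {k : ℕ}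
    (hk : k < n i) : weightedIntegral (c i) (X ^ k * P) = 0 := by
  simpa [weightedIntegral_apply, mul_assoc] using hP.2.2 i k hk

lemma isMonicOfDegree (hP : IsMultipleHermite c n P) : IsMonicOfDegree P (∑ i, n i) :=
  ⟨hP.2.1, hP.1⟩

lemma natDegree_derivative_sub_add_lt {j : Fin r} {Q : ℝ[X]}
    (hP : IsMultipleHermite c n P) (hQ : IsMultipleHermite c (n + unitMI j) Q) :
    (derivative P - (2 * X - C (c j)) * P + 2 * Q).natDegree < ∑ i, (n + unitMI j) i := by
  have hXP : IsMonicOfDegree (X * P) (∑ i, n i + 1) := by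
    simpa [add_comm] using (isMonicOfDegree_X ℝ).mul hP.isMonicOfDegree
  have hQ' := hQ.isMonicOfDegree
  rw [sum_add_unitMI] at hQ' ⊢
  have hXPQ : (X * P - Q).natDegree ≤ ∑ i, n i :=
    Nat.lt_succ_iff.1 (hXP.natDegree_sub_lt (Nat.succ_ne_zero _) hQ')
  have hP' : (derivative P).natDegree ≤ ∑ i, n i := (natDegree_derivative_le P).trans (by
    rw [hP.2.1]; omega)
  rw [show derivative P - (2 * X - C (c j)) * P + 2 * Q =
    derivative P + C (c j) * P - C 2 * (X * P - Q) by rw [C_ofNat]; ring]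
  refine Nat.lt_succ_of_le ((natDegree_sub_le_of_le (natDegree_add_le_of_degree_le hP'
    ((natDegree_C_mul_le _ _).trans hP.2.1.le)) ((natDegree_C_mul_le _ _).trans hXPQ)).trans
    (max_self _).le)

lemma weightedIntegral_X_pow_mul_derivative_sub_add {j : Fin r} {Q : ℝ[X]}
    (hP : IsMultipleHermite c n P) (hQ : IsMultipleHermite c (n + unitMI j) Q) {i : Fin r}
    {k : ℕ} (hk : k < (n + unitMI j) i) :
    weightedIntegral (c i) (X ^ k * (derivative P - (2 * X - C (c j)) * P + 2 * Q)) = 0 := by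
  have hki : k ≤ n i := by simp only [Pi.add_apply, unitMI] at hk; split_ifs at hk <;> omega
  have hsplit : X ^ k * (derivative P - (2 * X - C (c j)) * P + 2 * Q) =
      (derivative (X ^ k * P) + (C (c i) - 2 * X) * (X ^ k * P)) + (2 : ℝ) • (X ^ k * Q)
        + (c j - c i) • (X ^ k * P) - (k : ℝ) • (X ^ (k - 1) * P) := by
    simp only [derivative_mul, derivative_X_pow, smul_eq_C_mul, C_ofNat, C_sub]
    ring
  have hjk : (c j - c i) * weightedIntegral (c i) (X ^ k * P) = 0 := by
    rcases eq_or_ne i j with rfl | hij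
    · rw [sub_self, zero_mul]
    · simp only [Pi.add_apply, unitMI, hij, if_false, add_zero] at hk
      rw [hP.weightedIntegral_X_pow_mul_eq_zero hk, mul_zero]
  have hk1 : (k : ℝ) * weightedIntegral (c i) (X ^ (k - 1) * P) = 0 := by
    rcases Nat.eq_zero_or_pos k with rfl | hpos
    · rw [Nat.cast_zero, zero_mul]
    · rw [hP.weightedIntegral_X_pow_mul_eq_zero (by omega), mul_zero]
  rw [hsplit, map_sub, map_add, map_add, map_smul, map_smul, map_smul, smul_eq_mul, smul_eq_mul,
    smul_eq_mul, weightedIntegral_derivative_add, hQ.weightedIntegral_X_pow_mul_eq_zero hk, hjk,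
    hk1]
  ring

theorem derivative_eq (hc : Function.Injective c) {j : Fin r} {Q : ℝ[X]}
    (hP : IsMultipleHermite c n P) (hQ : IsMultipleHermite c (n + unitMI j) Q) :
    derivative P = (2 * X - C (c j)) * P - 2 * Q := by
  have h := eq_zero_of_weightedIntegral_X_pow_mul_eq_zero hc (n + unitMI j)
    (natDegree_derivative_sub_add_lt hP hQ)
    fun i k hk => weightedIntegral_X_pow_mul_derivative_sub_add hP hQ hk
  linear_combination h

end IsMultipleHermite

theorem multipleHermite_wronskian_eq_hankel_general {r : ℕ}
    (c : Fin r → ℝ) (hc : Function.Injective c)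
    (H : (Fin r → ℕ) → Polynomial ℝ) (hH : ∀ n, IsMultipleHermite c n (H n))
    (n : Fin r → ℕ) (j : Fin r) (l : ℕ) (x : ℝ) :
    Matrix.det (Matrix.of fun i k : Fin l =>
        (Polynomial.derivative^[(i : ℕ)] (H (n + (k : ℕ) • unitMI j))).eval x) =
      (-2 : ℝ) ^ (l * (l - 1) / 2) *
        Matrix.det (Matrix.of fun i k : Fin l =>
          (H (n + ((i : ℕ) + (k : ℕ)) • unitMI j)).eval x) := by
  refine det_iterate_derivative_eq_pow_mul_det_hankel (B := 2 * X - C (c j))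
    (P := fun k => H (n + k • unitMI j)) (fun k => ?_) l x
  rw [(hH _).derivative_eq hc (hH _), succ_nsmul, ← add_assoc, C_neg, C_ofNat]
  ring

/-- the Wronskian of the multiple Hermite polynomials along the path
`(n, n+e_j, …, n+(l−1)e_j)` equals `(−2)^(l(l−1)/2)` times the Hankel determinant
`det (H_{n+(i+k)e_j}(x))_{i,k<l}`. -/
theorem multipleHermite_wronskian_eq_hankel {r : ℕ} (hr : 1 ≤ r)
    (c : Fin r → ℝ) (hc : Function.Injective c)
    (H : (Fin r → ℕ) → Polynomial ℝ) (hH : ∀ n, IsMultipleHermite c n (H n))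
    (n : Fin r → ℕ) (j : Fin r) (l : ℕ) (hl : 1 ≤ l) (x : ℝ) :
    Matrix.det (Matrix.of fun i k : Fin l =>
        (Polynomial.derivative^[(i : ℕ)] (H (n + (k : ℕ) • unitMI j))).eval x) =
      (-2 : ℝ) ^ (l * (l - 1) / 2) *
        Matrix.det (Matrix.of fun i k : Fin l =>
          (H (n + ((i : ℕ) + (k : ℕ)) • unitMI j)).eval x) :=
  multipleHermite_wronskian_eq_hankel_general c hc H hH n j l x
end

section
/- For r = 2, n⃗ = (1,1), and α⃗ = (1/2, 1/3), the naive Turán expression for the multiple Laguerre polynomials of the first kind equals the explicit quintic polynomial (L_{(2,1)}^{α⃗}(x))² − L_{(1,1)}^{α⃗}(x) · L_{(3,1)}^{α⃗}(x) = 2x⁵ − (119/6)x⁴ + (647/9)x³ − (7495/72)x² + (185/3)x − 10, and this polynomial takes both strictly positive and strictly negative values on (0, ∞); in particular, the inequality (L_{n+1,m}^{α⃗}(x))² − L_{n,m}^{α⃗}(x) · L_{n+2,m}^{α⃗}(x) > 0 for all x > 0 fails for multiple Laguerre polynomials of the first kind. -/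
open MeasureTheory Polynomial Finset

/-- `P` is the multiple Laguerre polynomial of the first kind for the parameters `α`
and the multi-index `n`: it is monic of degree `|n|` and satisfies
`∫_0^∞ x^k P(x) x^(α j) exp(-x) dx = 0` for all `k < n j` and all `j`. -/
def IsMultipleLaguerreI {r : ℕ} (α : Fin r → ℝ) (n : Fin r → ℕ)
    (P : Polynomial ℝ) : Prop :=
  P.Monic ∧ P.natDegree = ∑ i, n i ∧
    ∀ j : Fin r, ∀ k < n j,
      ∫ x in Set.Ioi (0 : ℝ), x ^ k * P.eval x * (x ^ (α j) * Real.exp (-x)) = 0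

/-- The `j`-th standard unit vector `e⃗_j` in `ℝ^r`. -/
def unitR {r : ℕ} (j : Fin r) : Fin r → ℝ := fun i => if i = j then 1 else 0

/-!
Each orthogonality condition is a Gamma-function moment: for `β > -1`,
`∫_0^∞ x^m x^β e^(-x) dx = Γ(β + 1) · (β + 1)_m` with the rising factorial `(β + 1)_m`.
Dividing by `Γ(β + 1) > 0` turns the conditions into a linear system with rational
coefficients for the non-leading coefficients of a monic polynomial, which determines
`L_(1,1)`, `L_(2,1)` and `L_(3,1)` explicitly; the Turán expression is then a polynomial
identity, positive at `x = 1` and negative at `x = 1/10`.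
-/

theorem Real.Gamma_add_nat_eq_mul_ascPochhammer {s : ℝ} (hs : 0 < s) (n : ℕ) :
    Real.Gamma (s + n) = Real.Gamma s * (ascPochhammer ℝ n).eval s := by
  induction n with
  | zero => simp
  | succ n ih =>
    rw [Nat.cast_succ, ← add_assoc, Real.Gamma_add_one (by positivity), ih,
      ascPochhammer_succ_eval]
    ring

section GammaMoments

variable {β : ℝ}

lemma integrableOn_pow_mul_rpow_mul_exp (hβ : -1 < β) (m : ℕ) :
    IntegrableOn (fun x : ℝ => x ^ m * (x ^ β * Real.exp (-x))) (Set.Ioi 0) := by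
  refine (Real.GammaIntegral_convergent (s := β + 1 + m)
    (by linarith [m.cast_nonneg (α := ℝ)])).congr_fun
    (fun x hx => ?_) measurableSet_Ioi
  dsimp only
  rw [add_sub_right_comm, add_sub_cancel_right, Real.rpow_add_natCast (ne_of_gt hx)]
  ring

lemma integral_Ioi_pow_mul_rpow_mul_exp (hβ : -1 < β) (m : ℕ) :
    ∫ x in Set.Ioi 0, x ^ m * (x ^ β * Real.exp (-x)) =
      Real.Gamma (β + 1) * (ascPochhammer ℝ m).eval (β + 1) := by
  rw [← Real.Gamma_add_nat_eq_mul_ascPochhammer (by linarith),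
    Real.Gamma_eq_integral (by linarith [m.cast_nonneg (α := ℝ)])]
  refine setIntegral_congr_fun measurableSet_Ioi fun x hx => ?_
  rw [add_sub_right_comm, add_sub_cancel_right, Real.rpow_add_natCast (ne_of_gt hx)]
  ring

lemma integral_Ioi_pow_mul_eval_mul_rpow_mul_exp (hβ : -1 < β) (m : ℕ) (P : ℝ[X]) :
    ∫ x in Set.Ioi 0, x ^ m * P.eval x * (x ^ β * Real.exp (-x)) =
      Real.Gamma (β + 1) * ∑ i ∈ range (P.natDegree + 1),
        P.coeff i * (ascPochhammer ℝ (m + i)).eval (β + 1) := by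
  have hsum : ∀ x : ℝ, x ^ m * P.eval x * (x ^ β * Real.exp (-x)) =
      ∑ i ∈ range (P.natDegree + 1), P.coeff i * (x ^ (m + i) * (x ^ β * Real.exp (-x))) := by
    intro x
    simp only [eval_eq_sum_range, mul_sum, sum_mul, pow_add]
    exact sum_congr rfl fun i _ => by ring
  simp_rw [hsum, mul_sum]
  rw [integral_finsetSum _ fun i _ => (integrableOn_pow_mul_rpow_mul_exp hβ _).const_mul _]
  refine sum_congr rfl fun i _ => ?_
  rw [integral_const_mul, integral_Ioi_pow_mul_rpow_mul_exp hβ]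
  ring

end GammaMoments

namespace IsMultipleLaguerreI

variable {r : ℕ} {α : Fin r → ℝ} {n : Fin r → ℕ} {P : ℝ[X]}

lemma eval_eq (h : IsMultipleLaguerreI α n P) (x : ℝ) :
    P.eval x = ∑ i ∈ range (∑ j, n j), P.coeff i * x ^ i + x ^ ∑ j, n j := by
  conv_lhs => rw [h.1.as_sum, h.2.1]
  simp [eval_finsetSum, add_comm]

lemma sum_coeff_mul_ascPochhammer_eq_zero (h : IsMultipleLaguerreI α n P) {j : Fin r}
    (hα : -1 < α j) {k : ℕ} (hk : k < n j) :
    ∑ i ∈ range (∑ j, n j), P.coeff i * (ascPochhammer ℝ (k + i)).eval (α j + 1) +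
      (ascPochhammer ℝ (k + ∑ j, n j)).eval (α j + 1) = 0 := by
  have hmoment := h.2.2 j k hk
  rw [integral_Ioi_pow_mul_eval_mul_rpow_mul_exp hα, sum_range_succ, h.1.coeff_natDegree,
    one_mul, h.2.1] at hmoment
  exact (mul_eq_zero.mp hmoment).resolve_left (Real.Gamma_pos_of_pos (by linarith)).ne'

end IsMultipleLaguerreI

section
variable {P : ℝ[X]}

lemma eval_of_isMultipleLaguerreI_one_one (h : IsMultipleLaguerreI ![1/2, 1/3] ![1, 1] P)
    (x : ℝ) : P.eval x = x ^ 2 - 23/6 * x + 2 := by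
  have e₀ := h.sum_coeff_mul_ascPochhammer_eq_zero (j := 0) (k := 0) (by norm_num) (by decide)
  have e₁ := h.sum_coeff_mul_ascPochhammer_eq_zero (j := 1) (k := 0) (by norm_num) (by decide)
  norm_num [Fin.sum_univ_two, sum_range_succ, ascPochhammer_succ_eval] at e₀ e₁
  have c₀ : P.coeff 0 = 2 := by linarith
  have c₁ : P.coeff 1 = -23/6 := by linarith
  rw [h.eval_eq, show ∑ j, ![1, 1] j = 2 from rfl]
  simp only [sum_range_succ, sum_range_zero, c₀, c₁]
  ring

lemma eval_of_isMultipleLaguerreI_two_one (h : IsMultipleLaguerreI ![1/2, 1/3] ![2, 1] P)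
    (x : ℝ) : P.eval x = x ^ 3 - 25/3 * x ^ 2 + 185/12 * x - 5 := by
  have e₀ := h.sum_coeff_mul_ascPochhammer_eq_zero (j := 0) (k := 0) (by norm_num) (by decide)
  have e₁ := h.sum_coeff_mul_ascPochhammer_eq_zero (j := 0) (k := 1) (by norm_num) (by decide)
  have e₂ := h.sum_coeff_mul_ascPochhammer_eq_zero (j := 1) (k := 0) (by norm_num) (by decide)
  norm_num [Fin.sum_univ_two, sum_range_succ, ascPochhammer_succ_eval] at e₀ e₁ e₂
  have c₀ : P.coeff 0 = -5 := by linarith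
  have c₁ : P.coeff 1 = 185/12 := by linarith
  have c₂ : P.coeff 2 = -25/3 := by linarith
  rw [h.eval_eq, show ∑ j, ![2, 1] j = 3 from rfl]
  simp only [sum_range_succ, sum_range_zero, c₀, c₁, c₂]
  ring

lemma eval_of_isMultipleLaguerreI_three_one (h : IsMultipleLaguerreI ![1/2, 1/3] ![3, 1] P)
    (x : ℝ) : P.eval x = x ^ 4 - 89/6 * x ^ 3 + 245/4 * x ^ 2 - 595/8 * x + 35/2 := by
  have e₀ := h.sum_coeff_mul_ascPochhammer_eq_zero (j := 0) (k := 0) (by norm_num) (by decide)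
  have e₁ := h.sum_coeff_mul_ascPochhammer_eq_zero (j := 0) (k := 1) (by norm_num) (by decide)
  have e₂ := h.sum_coeff_mul_ascPochhammer_eq_zero (j := 0) (k := 2) (by norm_num) (by decide)
  have e₃ := h.sum_coeff_mul_ascPochhammer_eq_zero (j := 1) (k := 0) (by norm_num) (by decide)
  norm_num [Fin.sum_univ_two, sum_range_succ, ascPochhammer_succ_eval] at e₀ e₁ e₂ e₃
  have c₀ : P.coeff 0 = 35/2 := by linarith
  have c₁ : P.coeff 1 = -595/8 := by linarith
  have c₂ : P.coeff 2 = 245/4 := by linarith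
  have c₃ : P.coeff 3 = -89/6 := by linarith
  rw [h.eval_eq, show ∑ j, ![3, 1] j = 4 from rfl]
  simp only [sum_range_succ, sum_range_zero, c₀, c₁, c₂, c₃]
  ring

end

/-- for `r = 2`, `n⃗ = (1,1)` and `α⃗ = (1/2, 1/3)`, the naive Turán
expression for the multiple Laguerre polynomials of the first kind equals the explicit
quintic `2x⁵ − (119/6)x⁴ + (647/9)x³ − (7495/72)x² + (185/3)x − 10`, which takes both
strictly positive and strictly negative values on `(0, ∞)`; in particular the naive
Turán inequality fails for multiple Laguerre polynomials of the first kind. -/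
theorem multipleLaguerreI_naive_turan_fails
    (P11 P21 P31 : Polynomial ℝ)
    (h11 : IsMultipleLaguerreI (r := 2) ![1/2, 1/3] ![1, 1] P11)
    (h21 : IsMultipleLaguerreI (r := 2) ![1/2, 1/3] ![2, 1] P21)
    (h31 : IsMultipleLaguerreI (r := 2) ![1/2, 1/3] ![3, 1] P31) :
    (∀ x : ℝ, P21.eval x ^ 2 - P11.eval x * P31.eval x =
        2 * x ^ 5 - 119 / 6 * x ^ 4 + 647 / 9 * x ^ 3 - 7495 / 72 * x ^ 2 +
          185 / 3 * x - 10) ∧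
    (∃ x : ℝ, 0 < x ∧ 0 < P21.eval x ^ 2 - P11.eval x * P31.eval x) ∧
    (∃ x : ℝ, 0 < x ∧ P21.eval x ^ 2 - P11.eval x * P31.eval x < 0) ∧
    ¬ (∀ x : ℝ, 0 < x → 0 < P21.eval x ^ 2 - P11.eval x * P31.eval x) := by
  have hturan : ∀ x : ℝ, P21.eval x ^ 2 - P11.eval x * P31.eval x =
      2 * x ^ 5 - 119 / 6 * x ^ 4 + 647 / 9 * x ^ 3 - 7495 / 72 * x ^ 2 +
        185 / 3 * x - 10 := by
    intro x
    rw [eval_of_isMultipleLaguerreI_one_one h11, eval_of_isMultipleLaguerreI_two_one h21,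
      eval_of_isMultipleLaguerreI_three_one h31]
    ring
  obtain ⟨x₀, hx₀, hneg⟩ : ∃ x : ℝ, 0 < x ∧ P21.eval x ^ 2 - P11.eval x * P31.eval x < 0 :=
    ⟨1 / 10, by norm_num, by rw [hturan]; norm_num⟩
  exact ⟨hturan, ⟨1, one_pos, by rw [hturan]; norm_num⟩, ⟨x₀, hx₀, hneg⟩,
    fun hpos => lt_asymm hneg (hpos x₀ hx₀)⟩
end
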